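/- arXiv:2001.04093 — 4 statements merged into one kernel-verified Lean document; each statement's English description precedes it below -/
import Mathlib

section
/- With the notation of the operator D_L (periodic boundary treatment), for v ∈ C¹([a,b]) periodic with periodic derivative, D_L[v](x) = (1/α) L_L^{-1}[v'](x) for all x ∈ [a,b]; equivalently D_L[v'](x) = v'(x) − α D_L[v](x). -/
open MeasureTheory intervalIntegral

noncomputable def IL (α a : ℝ) (v : ℝ → ℝ) (x : ℝ) : ℝ :=
  α * ∫ y in a..x, Real.exp (-(α * (x - y))) * v y

noncomputable def Linv (α a b : ℝ) (v : ℝ → ℝ) (x : ℝ) : ℝ :=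
  IL α a v x + (IL α a v b / (1 - Real.exp (-(α * (b - a))))) * Real.exp (-(α * (x - a)))

noncomputable def DL (α a b : ℝ) (v : ℝ → ℝ) (x : ℝ) : ℝ := v x - Linv α a b v x

/-- Integration by parts against the kernel `y ↦ exp (-α (x - y))`, whose derivative is
`α` times itself. -/
theorem IL_deriv {v : ℝ → ℝ} (hv : ContDiff ℝ 1 v) (α a x : ℝ) :
    IL α a (deriv v) x = α * (v x - Real.exp (-(α * (x - a))) * v a - IL α a v x) := by
  have hkernel : ∀ y, HasDerivAt (fun y => Real.exp (-(α * (x - y))))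
      (Real.exp (-(α * (x - y))) * α) y := fun y => by
    simpa using (((hasDerivAt_id y).const_sub x).const_mul α).neg.exp
  have hparts := integral_mul_deriv_eq_deriv_mul (a := a) (b := x)
    (fun y _ => hkernel y) (fun y _ => (hv.differentiable one_ne_zero y).hasDerivAt)
    (by apply Continuous.intervalIntegrable; fun_prop)
    ((hv.continuous_deriv le_rfl).intervalIntegrable _ _)
  have hkernel_mul : ∫ y in a..x, Real.exp (-(α * (x - y))) * α * v y
      = α * ∫ y in a..x, Real.exp (-(α * (x - y))) * v y := by
    rw [← intervalIntegral.integral_const_mul]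
    congr 1 with y
    ring
  simp only [sub_self, mul_zero, neg_zero, Real.exp_zero, one_mul, hkernel_mul] at hparts
  rw [IL, IL, hparts]

/-- With `v a = v b`, the boundary term of `IL_deriv` at `x` cancels the one that the periodic
correction picks up from `IL_deriv` at `b`. -/
theorem Linv_deriv {v : ℝ → ℝ} (hv : ContDiff ℝ 1 v) {α a b : ℝ} (hper : v a = v b)
    (hμ : Real.exp (-(α * (b - a))) ≠ 1) (x : ℝ) :
    Linv α a b (deriv v) x = α * DL α a b v x := by
  have hμ' : 1 - Real.exp (-(α * (b - a))) ≠ 0 := sub_ne_zero.2 hμ.symm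
  rw [DL, Linv, Linv, IL_deriv hv, IL_deriv hv, ← hper]
  field_simp
  ring

theorem DL_eq_Linv_deriv_general (a b α : ℝ) (hab : a < b) (hα : 0 < α)
    (v : ℝ → ℝ) (hv : ContDiff ℝ 1 v) (hper : v a = v b) :
    (∀ x ∈ Set.Icc a b, DL α a b v x = (1 / α) * Linv α a b (deriv v) x) ∧
    (∀ x ∈ Set.Icc a b, DL α a b (deriv v) x = deriv v x - α * DL α a b v x) := by
  have hμ : Real.exp (-(α * (b - a))) ≠ 1 :=
    (Real.exp_lt_one_iff.2 (neg_lt_zero.2 (mul_pos hα (sub_pos.2 hab)))).ne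
  refine ⟨fun x _ => ?_, fun x _ => ?_⟩
  · rw [Linv_deriv hv hper hμ, one_div, inv_mul_cancel_left₀ hα.ne']
  · rw [DL, Linv_deriv hv hper hμ]

theorem DL_eq_Linv_deriv (a b α : ℝ) (hab : a < b) (hα : 0 < α)
    (v : ℝ → ℝ) (hv : ContDiff ℝ 1 v) (hper : v a = v b)
    (hper' : deriv v a = deriv v b) :
    (∀ x ∈ Set.Icc a b, DL α a b v x = (1 / α) * Linv α a b (deriv v) x) ∧
    (∀ x ∈ Set.Icc a b, DL α a b (deriv v) x = deriv v x - α * DL α a b v x) :=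
  DL_eq_Linv_deriv_general a b α hab hα v hv hper
end

section
/- The operator D_L commutes with differentiation on periodic C¹ functions: d/dx (D_L[v])(x) = D_L[v'](x) for all x ∈ [a,b]. -/
open MeasureTheory intervalIntegral

/-!
Both `IL` and the periodic correction term solve `u' = α w - α u` with input `w`, so
`(Linv v)' = α v - α Linv v` for continuous `v`. On the other hand, integrating by parts turns
`IL v'` into `α v - α IL v` plus a boundary term `-α e^{-α(x-a)} v(a)`; periodicity `v a = v b`
makes the correction term of `Linv v'` cancel this boundary term exactly, so
`Linv v' = α v - α Linv v` as well, and `(DL v)' = v' - (Linv v)' = DL v'`.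
-/

open Real

theorem hasDerivAt_exp_neg_mul_sub (α c x : ℝ) :
    HasDerivAt (fun x => exp (-(α * (x - c)))) (-α * exp (-(α * (x - c)))) x := by
  have h : HasDerivAt (fun x : ℝ => -(α * (x - c))) (-α) x := by
    simpa using ((hasDerivAt_id x).sub_const c).const_mul (-α)
  exact (h.exp).congr_deriv (mul_comm _ _)

theorem IL_eq_exp_mul_integral (α a : ℝ) (w : ℝ → ℝ) (x : ℝ) :
    IL α a w x = α * (exp (-(α * x)) * ∫ y in a..x, exp (α * y) * w y) := by
  rw [IL, ← intervalIntegral.integral_const_mul (exp (-(α * x)))]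
  congr 1
  refine integral_congr fun y _ => ?_
  simp only [← mul_assoc, ← exp_add]
  ring_nf

section

variable {α a b : ℝ} {w : ℝ → ℝ}

theorem hasDerivAt_IL (hw : Continuous w) (x : ℝ) :
    HasDerivAt (IL α a w) (α * w x - α * IL α a w x) x := by
  have hint : HasDerivAt (fun x => ∫ y in a..x, exp (α * y) * w y) (exp (α * x) * w x) x := by
    have hc : Continuous fun y => exp (α * y) * w y := by fun_prop
    exact integral_hasDerivAt_right (hc.intervalIntegrable _ _)
      (hc.stronglyMeasurableAtFilter _ _) hc.continuousAt
  have hexp : HasDerivAt (fun x => exp (-(α * x))) (-α * exp (-(α * x))) x := by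
    simpa using hasDerivAt_exp_neg_mul_sub α 0 x
  rw [funext (IL_eq_exp_mul_integral α a w)]
  refine ((hexp.mul hint).const_mul α).congr_deriv ?_
  have hcancel : exp (-(α * x)) * exp (α * x) = 1 := by rw [← exp_add]; simp
  linear_combination (α * w x) * hcancel

theorem hasDerivAt_Linv (hw : Continuous w) (x : ℝ) :
    HasDerivAt (Linv α a b w) (α * w x - α * Linv α a b w x) x := by
  have hcorr := (hasDerivAt_exp_neg_mul_sub α a x).const_mul
    (IL α a w b / (1 - exp (-(α * (b - a)))))
  refine ((hasDerivAt_IL hw x).add hcorr).congr_deriv ?_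
  rw [Linv]
  ring

end

section

variable {α a b : ℝ} {v : ℝ → ℝ}

theorem IL_deriv_eq (hv : ContDiff ℝ 1 v) (x : ℝ) :
    IL α a (deriv v) x = α * v x - α * exp (-(α * (x - a))) * v a - α * IL α a v x := by
  have hkernel :
      ∀ y, HasDerivAt (fun y => exp (-(α * (x - y)))) (α * exp (-(α * (x - y)))) y := by
    intro y
    have h : HasDerivAt (fun y : ℝ => -(α * (x - y))) α y := by
      simpa using ((hasDerivAt_id y).const_sub x).const_mul (-α)
    exact h.exp.congr_deriv (mul_comm _ _)
  have hparts := integral_mul_deriv_eq_deriv_mul (a := a) (b := x) (fun y _ => hkernel y)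
    (fun y _ => (hv.differentiable one_ne_zero y).hasDerivAt)
    (by apply Continuous.intervalIntegrable; fun_prop)
    ((hv.continuous_deriv le_rfl).intervalIntegrable _ _)
  rw [IL, IL, hparts]
  simp only [sub_self, mul_zero, neg_zero, exp_zero, mul_assoc, intervalIntegral.integral_const_mul]
  ring

theorem Linv_deriv_eq (hv : ContDiff ℝ 1 v) (hper : v a = v b) (hαba : α * (b - a) ≠ 0)
    (x : ℝ) : Linv α a b (deriv v) x = α * v x - α * Linv α a b v x := by
  have hden : 1 - exp (-(α * (b - a))) ≠ 0 := by
    rw [sub_ne_zero, ne_comm, Ne, exp_eq_one_iff, neg_eq_zero]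
    exact hαba
  rw [Linv, Linv, IL_deriv_eq hv x, IL_deriv_eq hv b, ← hper]
  field_simp
  ring

end

theorem deriv_DL_comm_general (a b α : ℝ) (hab : a < b) (hα : 0 < α)
    (v : ℝ → ℝ) (hv : ContDiff ℝ 1 v) (hper : v a = v b) :
    ∀ x ∈ Set.Icc a b, HasDerivAt (DL α a b v) (DL α a b (deriv v) x) x := by
  intro x _
  have hαba : α * (b - a) ≠ 0 := mul_ne_zero hα.ne' (sub_pos.2 hab).ne'
  rw [DL, Linv_deriv_eq hv hper hαba]
  exact ((hv.differentiable one_ne_zero x).hasDerivAt.sub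
    (hasDerivAt_Linv hv.continuous x)).congr_deriv (by ring)

theorem deriv_DL_comm (a b α : ℝ) (hab : a < b) (hα : 0 < α)
    (v : ℝ → ℝ) (hv : ContDiff ℝ 1 v) (hper : v a = v b)
    (hper' : deriv v a = deriv v b) :
    ∀ x ∈ Set.Icc a b, HasDerivAt (DL α a b v) (DL α a b (deriv v) x) x :=
  deriv_DL_comm_general a b α hab hα v hv hper
end

section
/- Two-dimensional A-stability with cross terms: let A₁₁ > 0, A₂₂ > 0 and (A₁₂+A₂₁)/√(A₁₁A₂₂) have absolute value at most 2 (ellipticity). Let R_x, R_y ∈ ℝ with R_x² ≤ M_k and R_y² ≤ M_k, and let 0 < β ≤ 1/(2 M_k). Then the amplification factor Q̂ = 1 − β R_x² − β R_y² − ((A₁₂+A₂₁)/√(A₁₁A₂₂)) β R_x R_y satisfies |Q̂| ≤ 1. -/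
theorem two_dim_A_stability (Mk : ℝ) (hMk : 0 < Mk)
    (A11 A12 A21 A22 : ℝ) (hA11 : 0 < A11) (hA22 : 0 < A22)
    (hcross : |A12 + A21| ≤ 2 * Real.sqrt (A11 * A22))
    (Rx Ry : ℝ) (hRx : Rx ^ 2 ≤ Mk) (hRy : Ry ^ 2 ≤ Mk)
    (β : ℝ) (hβ0 : 0 < β) (hβ : β ≤ 1 / (2 * Mk)) :
    |1 - β * Rx ^ 2 - β * Ry ^ 2
      - (A12 + A21) / Real.sqrt (A11 * A22) * β * (Rx * Ry)| ≤ 1 := by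
  have hs : 0 < Real.sqrt (A11 * A22) := Real.sqrt_pos.mpr (by positivity)
  set s := Real.sqrt (A11 * A22)
  set c := (A12 + A21) / s with hc
  have hc2 : |c| ≤ 2 := by
    rw [hc, abs_div, abs_of_pos hs, div_le_iff₀ hs]
    calc |A12 + A21| ≤ 2 * s := hcross
      _ = 2 * s := rfl
  have hcl : -2 ≤ c := (abs_le.mp hc2).1
  have hcu : c ≤ 2 := (abs_le.mp hc2).2
  have hβMk : β * Mk ≤ 1 / 2 := by
    rw [le_div_iff₀ (by norm_num : (0:ℝ) < 2)]
    have := (le_div_iff₀ (by positivity : (0:ℝ) < 2 * Mk)).mp hβ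
    nlinarith
  rw [abs_le]
  constructor
  · nlinarith [sq_nonneg (Rx + Ry), sq_nonneg (Rx - Ry), hβ0.le,
      mul_nonneg hβ0.le (sq_nonneg (Rx + Ry)), mul_nonneg hβ0.le (sq_nonneg (Rx - Ry)),
      mul_le_mul_of_nonneg_left hcu (mul_nonneg hβ0.le (sq_nonneg Rx))]
  · nlinarith [sq_nonneg (Rx + Ry), sq_nonneg (Rx - Ry),
      mul_nonneg hβ0.le (sq_nonneg (Rx + Ry)), mul_nonneg hβ0.le (sq_nonneg (Rx - Ry))]
end

section
/- For z ∈ ℝ and k ≥ 1, the function T_k(z) = z²(1 − (z²/(1+z²))^k) satisfies 0 ≤ T_k(z) ≤ k, and therefore S_k(z) = T_k(z) · (1 − (z²/(1+z²))^k) ≤ k as well; consequently 2/k is an admissible (though not optimal) A-stability threshold: |1 − βS_k(z)| ≤ 1 for all z whenever 0 < β ≤ 2/k. -/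
/-!
Write `w = z²/(1+z²) ∈ [0, 1]`, so that `z²(1 - w) = w`. Bernoulli's inequality
`wᵏ ≥ 1 - k(1 - w)` gives `T_k(z) = z²(1 - wᵏ) ≤ k z²(1 - w) = k w ≤ k`, and since
`0 ≤ 1 - wᵏ ≤ 1` also `0 ≤ S_k(z) ≤ T_k(z)`. Then `0 ≤ βS_k(z) ≤ 2` for `0 < β ≤ 2/k`,
which is exactly `|1 - βS_k(z)| ≤ 1`.
-/

lemma sq_div_one_add_sq_le_one (z : ℝ) : z ^ 2 / (1 + z ^ 2) ≤ 1 := by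
  rw [div_le_one (by positivity)]
  linarith

lemma sq_mul_one_sub_sq_div_one_add_sq (z : ℝ) :
    z ^ 2 * (1 - z ^ 2 / (1 + z ^ 2)) = z ^ 2 / (1 + z ^ 2) := by
  field_simp
  ring

lemma one_sub_pow_sq_div_one_add_sq_nonneg (z : ℝ) (k : ℕ) :
    0 ≤ 1 - (z ^ 2 / (1 + z ^ 2)) ^ k :=
  sub_nonneg.2 (pow_le_one₀ (by positivity) (sq_div_one_add_sq_le_one z))

lemma one_sub_pow_sq_div_one_add_sq_le_one (z : ℝ) (k : ℕ) :
    1 - (z ^ 2 / (1 + z ^ 2)) ^ k ≤ 1 :=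
  sub_le_self 1 (by positivity)

lemma sq_mul_one_sub_pow_sq_div_one_add_sq_le (z : ℝ) (k : ℕ) :
    z ^ 2 * (1 - (z ^ 2 / (1 + z ^ 2)) ^ k) ≤ k := by
  have hw₀ : 0 ≤ z ^ 2 / (1 + z ^ 2) := by positivity
  set w := z ^ 2 / (1 + z ^ 2)
  have bernoulli : 1 - w ^ k ≤ k * (1 - w) := by
    linarith [one_add_mul_sub_le_pow (show -1 ≤ w by linarith) k]
  calc z ^ 2 * (1 - w ^ k) ≤ z ^ 2 * (k * (1 - w)) :=
        mul_le_mul_of_nonneg_left bernoulli (sq_nonneg z)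
    _ = k * w := by rw [mul_left_comm, sq_mul_one_sub_sq_div_one_add_sq]
    _ ≤ k := mul_le_of_le_one_right k.cast_nonneg (sq_div_one_add_sq_le_one z)

lemma abs_one_sub_le_one {y : ℝ} (h₀ : 0 ≤ y) (h₂ : y ≤ 2) : |1 - y| ≤ 1 :=
  abs_le.2 ⟨by linarith, by linarith⟩

theorem T_bound_and_stability_general (z : ℝ) (k : ℕ) :
    (0 ≤ z ^ 2 * (1 - (z ^ 2 / (1 + z ^ 2)) ^ k)) ∧
    (z ^ 2 * (1 - (z ^ 2 / (1 + z ^ 2)) ^ k) ≤ (k : ℝ)) ∧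
    (z ^ 2 * (1 - (z ^ 2 / (1 + z ^ 2)) ^ k) ^ 2 ≤ (k : ℝ)) ∧
    (∀ β : ℝ, 0 < β → β ≤ 2 / (k : ℝ) →
      |1 - β * (z ^ 2 * (1 - (z ^ 2 / (1 + z ^ 2)) ^ k) ^ 2)| ≤ 1) := by
  have hfac₀ := one_sub_pow_sq_div_one_add_sq_nonneg z k
  have hfac₁ := one_sub_pow_sq_div_one_add_sq_le_one z k
  set a := 1 - (z ^ 2 / (1 + z ^ 2)) ^ k
  have hT₀ : 0 ≤ z ^ 2 * a := by positivity
  have hT := sq_mul_one_sub_pow_sq_div_one_add_sq_le z k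
  have hS : z ^ 2 * a ^ 2 ≤ k :=
    calc z ^ 2 * a ^ 2 = z ^ 2 * a * a := by ring
      _ ≤ z ^ 2 * a := mul_le_of_le_one_right hT₀ hfac₁
      _ ≤ k := hT
  refine ⟨hT₀, hT, hS, fun β hβ hβk => abs_one_sub_le_one (by positivity) ?_⟩
  have hk : (0 : ℝ) < k := (div_pos_iff_of_pos_left two_pos).1 (hβ.trans_le hβk)
  calc β * (z ^ 2 * a ^ 2) ≤ β * k := mul_le_mul_of_nonneg_left hS hβ.le
    _ ≤ 2 := (le_div_iff₀ hk).1 hβk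

theorem T_bound_and_stability (z : ℝ) (k : ℕ) (hk : 1 ≤ k) :
    (0 ≤ z ^ 2 * (1 - (z ^ 2 / (1 + z ^ 2)) ^ k)) ∧
    (z ^ 2 * (1 - (z ^ 2 / (1 + z ^ 2)) ^ k) ≤ (k : ℝ)) ∧
    (z ^ 2 * (1 - (z ^ 2 / (1 + z ^ 2)) ^ k) ^ 2 ≤ (k : ℝ)) ∧
    (∀ β : ℝ, 0 < β → β ≤ 2 / (k : ℝ) →
      |1 - β * (z ^ 2 * (1 - (z ^ 2 / (1 + z ^ 2)) ^ k) ^ 2)| ≤ 1) :=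
  T_bound_and_stability_general z k
end
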